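/- arXiv:2511.09839 — 5 statements merged into one kernel-verified Lean document; each statement's English description precedes it below -/
import Mathlib

section
/- The Walrasian quantity q^W yields a strict relative payoff advantage over any other quantity in mixed profiles: for all q ≠ q^W and all integers 1 ≤ m < n, p(m·q^W + (n-m)·q)·q^W - c(q^W) > p(m·q^W + (n-m)·q)·q - c(q). -/
/-!
Switching from `q^W` to `q` at aggregate `X` changes the payoff by `p X * (q - q^W) - (c q - c q^W)`.
Replacing `q^W` by `q` in `n - m` of the slots moves the aggregate from `n * q^W` in the direction
of `q - q^W`; as `p` is decreasing, this only lowers the revenue term `p X * (q - q^W)`, so the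
strict loss from the deviation at `n * q^W` persists at the mixed aggregate.
-/

theorem StrictAnti.sub_mul_sub_neg {p : ℝ → ℝ} (hp : StrictAnti p) {a b x y : ℝ}
    (h : 0 < (a - b) * (x - y)) : (p a - p b) * (x - y) < 0 := by
  rcases pos_and_pos_or_neg_and_neg_of_mul_pos h with ⟨hab, hxy⟩ | ⟨hab, hxy⟩
  · exact mul_neg_of_neg_of_pos (sub_neg.mpr (hp (sub_pos.mp hab))) hxy
  · exact mul_neg_of_pos_of_neg (sub_pos.mpr (hp (sub_neg.mp hab))) hxy

theorem StrictAnti.payoff_lt_of_sub_mul_sub_pos {p : ℝ → ℝ} (hp : StrictAnti p) (c : ℝ → ℝ)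
    {A B x y : ℝ} (hB : p B * x - c x < p B * y - c y) (hAB : 0 < (A - B) * (x - y)) :
    p A * x - c x < p A * y - c y := by
  have hrevenue := hp.sub_mul_sub_neg hAB
  have hsplit : p A * x - c x - (p A * y - c y)
      = p B * x - c x - (p B * y - c y) + (p A - p B) * (x - y) := by ring
  linarith

theorem walrasian_relative_advantage_general
    (n : ℕ) (p c : ℝ → ℝ)
    (hp : StrictAnti p)
    (qW : ℝ)
    (hopt : ∀ q : ℝ, 0 ≤ q → q ≠ qW →
      p ((n : ℝ) * qW) * q - c q < p ((n : ℝ) * qW) * qW - c qW)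
    (q : ℝ) (hq : 0 ≤ q) (hne : q ≠ qW)
    (m : ℕ) (hmn : m < n) :
    p ((m : ℝ) * qW + ((n : ℝ) - (m : ℝ)) * q) * q - c q <
      p ((m : ℝ) * qW + ((n : ℝ) - (m : ℝ)) * q) * qW - c qW := by
  have hdeviators : (0 : ℝ) < n - m := sub_pos.mpr (by exact_mod_cast hmn)
  have hshift : 0 < ((m : ℝ) * qW + (n - m) * q - n * qW) * (q - qW) := by
    have hfactor : ((m : ℝ) * qW + (n - m) * q - n * qW) * (q - qW)
        = (n - m) * (q - qW) ^ 2 := by ring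
    rw [hfactor]
    exact mul_pos hdeviators (sq_pos_of_ne_zero (sub_ne_zero.mpr hne))
  exact hp.payoff_lt_of_sub_mul_sub_pos c (hopt q hq hne) hshift

/-- The Walrasian quantity yields a strict relative payoff advantage over any other
quantity in mixed profiles: for `q ≠ q^W` and `1 ≤ m < n`,
`p(m·q^W + (n-m)·q)·q^W - c(q^W) > p(m·q^W + (n-m)·q)·q - c(q)`. -/
theorem walrasian_relative_advantage
    (n : ℕ) (hn : 2 ≤ n) (p c : ℝ → ℝ)
    (hp : StrictAnti p) (hc : ConvexOn ℝ (Set.Ici 0) c)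
    (qW : ℝ) (hqW : 0 < qW)
    (hopt : ∀ q : ℝ, 0 ≤ q → q ≠ qW →
      p ((n : ℝ) * qW) * q - c q < p ((n : ℝ) * qW) * qW - c qW)
    (q : ℝ) (hq : 0 ≤ q) (hne : q ≠ qW)
    (m : ℕ) (hm1 : 1 ≤ m) (hmn : m < n) :
    p ((m : ℝ) * qW + ((n : ℝ) - (m : ℝ)) * q) * q - c q <
      p ((m : ℝ) * qW + ((n : ℝ) - (m : ℝ)) * q) * qW - c qW :=
  walrasian_relative_advantage_general n p c hp qW hopt q hq hne m hmn
end

section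
/- In a strictly quasi-submodular symmetric aggregative game, an aggregate-taking strategy s* yields a strictly higher payoff than any other strategy s' in any mixed monomorphic-deviation profile: for all s' ≠ s* and 1 ≤ m < n, π̃(s*, g(s',...,s' (m times), s*,...,s* (n-m times))) > π̃(s', g(s',...,s', s*,...,s*)). -/
/-!
Let `t* = g(s*, …, s*)` and `t` the aggregate of the mixed profile. If `s' < s*`, monotonicity of
`g` gives `t ≤ t*`, and strict quasi-submodularity carries the strict preference for `s*` over the
smaller `s'` from `t*` down to `t`; if `s' > s*`, then `t* ≤ t` and it carries the preference for
the smaller `s*` over `s'` up to `t`.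
-/

section QuasiSubmodular

variable {α β γ : Type*} [Preorder α] [PartialOrder β] [Preorder γ] {pay : α → β → γ}
  {s1 s2 : α} {t1 t2 : β}

theorem pay_lt_of_lower_preferred_of_le
    (hqsm : ∀ s1 s2 t1 t2, s1 < s2 → t1 < t2 → pay s2 t1 ≤ pay s1 t1 → pay s2 t2 < pay s1 t2)
    (hs : s1 < s2) (ht : t1 ≤ t2) (h : pay s2 t1 < pay s1 t1) : pay s2 t2 < pay s1 t2 := by
  rcases ht.lt_or_eq with ht | rfl
  · exact hqsm s1 s2 t1 t2 hs ht h.le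
  · exact h

theorem pay_lt_of_upper_preferred_of_le
    (hqsm : ∀ s1 s2 t1 t2, s1 < s2 → t1 < t2 → pay s1 t2 ≤ pay s2 t2 → pay s1 t1 < pay s2 t1)
    (hs : s1 < s2) (ht : t1 ≤ t2) (h : pay s1 t2 < pay s2 t2) : pay s1 t1 < pay s2 t1 := by
  rcases ht.lt_or_eq with ht | rfl
  · exact hqsm s1 s2 t1 t2 hs ht h.le
  · exact h

end QuasiSubmodular

theorem ite_le_const_of_le {ι α : Type*} [Preorder α] (p : ι → Prop) [DecidablePred p] {a b : α}
    (h : a ≤ b) : (fun i => if p i then a else b) ≤ fun _ => b :=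
  fun i => by dsimp only; split_ifs <;> order

theorem const_le_ite_of_le {ι α : Type*} [Preorder α] (p : ι → Prop) [DecidablePred p] {a b : α}
    (h : b ≤ a) : (fun _ => b) ≤ fun i => if p i then a else b :=
  fun i => by dsimp only; split_ifs <;> order

theorem ats_relative_advantage_general
    (n : ℕ) (S : Finset ℝ)
    (g : (Fin n → ℝ) → ℝ) (pay : ℝ → ℝ → ℝ)
    (hgmono : Monotone g)
    (hqsm1 : ∀ s1 s2 t1 t2 : ℝ, s1 < s2 → t1 < t2 →
      pay s2 t1 ≤ pay s1 t1 → pay s2 t2 < pay s1 t2)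
    (hqsm2 : ∀ s1 s2 t1 t2 : ℝ, s1 < s2 → t1 < t2 →
      pay s1 t2 ≤ pay s2 t2 → pay s1 t1 < pay s2 t1)
    (sstar : ℝ)
    (hATS : ∀ s ∈ S, s ≠ sstar →
      pay s (g fun _ => sstar) < pay sstar (g fun _ => sstar))
    (s' : ℝ) (hs'S : s' ∈ S) (hne : s' ≠ sstar)
    (m : ℕ) :
    pay s' (g fun i => if (i : ℕ) < m then s' else sstar) <
      pay sstar (g fun i => if (i : ℕ) < m then s' else sstar) := by
  have hbest := hATS s' hs'S hne
  rcases hne.lt_or_gt with hlt | hgt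
  · exact pay_lt_of_upper_preferred_of_le hqsm2 hlt
      (hgmono (ite_le_const_of_le _ hlt.le)) hbest
  · exact pay_lt_of_lower_preferred_of_le hqsm1 hgt
      (hgmono (const_le_ite_of_le _ hgt.le)) hbest

/-- In a strictly quasi-submodular symmetric aggregative game, an aggregate-taking
strategy `s*` earns strictly more than any other strategy `s'` in any profile where
`m` agents play `s'` and `n - m` agents play `s*` (with `1 ≤ m < n`). -/
theorem ats_relative_advantage
    (n : ℕ) (hn : 2 ≤ n) (S : Finset ℝ)
    (g : (Fin n → ℝ) → ℝ) (pay : ℝ → ℝ → ℝ)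
    (hgsym : ∀ (σ : Equiv.Perm (Fin n)) (s : Fin n → ℝ), g (s ∘ σ) = g s)
    (hgmono : Monotone g)
    (hqsm1 : ∀ s1 s2 t1 t2 : ℝ, s1 < s2 → t1 < t2 →
      pay s2 t1 ≤ pay s1 t1 → pay s2 t2 < pay s1 t2)
    (hqsm2 : ∀ s1 s2 t1 t2 : ℝ, s1 < s2 → t1 < t2 →
      pay s1 t2 ≤ pay s2 t2 → pay s1 t1 < pay s2 t1)
    (sstar : ℝ) (hsS : sstar ∈ S)
    (hATS : ∀ s ∈ S, s ≠ sstar →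
      pay s (g fun _ => sstar) < pay sstar (g fun _ => sstar))
    (s' : ℝ) (hs'S : s' ∈ S) (hne : s' ≠ sstar)
    (m : ℕ) (hm1 : 1 ≤ m) (hmn : m < n) :
    pay s' (g fun i => if (i : ℕ) < m then s' else sstar) <
      pay sstar (g fun i => if (i : ℕ) < m then s' else sstar) :=
  ats_relative_advantage_general n S g pay hgmono hqsm1 hqsm2 sstar hATS s' hs'S hne m
end

section
/- In a strictly quasi-submodular symmetric aggregative game, the aggregate-taking strategy is unique. -/
/-!
If `a < b` were both aggregate-taking strategies, then since the diagonal aggregate is strictly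
increasing, `a` is weakly preferred to `b` at the smaller aggregate; strict quasi-submodularity
makes `a` strictly preferred at the larger one, so `b` is not a best reply to its own aggregate.
-/

section AggregateTaking

variable {α β γ : Type*} [Preorder β] [Preorder γ] {pay : α → β → γ} {agg : α → β} {S : Set α}
  {a b : α}

theorem not_lt_of_isMaxOn_aggregate [Preorder α]
    (hqsm : ∀ s₁ s₂ t₁ t₂, s₁ < s₂ → t₁ < t₂ → pay s₂ t₁ ≤ pay s₁ t₁ → pay s₂ t₂ < pay s₁ t₂)
    (hagg : StrictMono agg) (ha : a ∈ S) (hb : b ∈ S)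
    (hA : IsMaxOn (pay · (agg a)) S a) (hB : IsMaxOn (pay · (agg b)) S b) : ¬a < b := by
  intro hab
  have hpref : pay b (agg a) ≤ pay a (agg a) := hA hb
  exact (hqsm a b _ _ hab (hagg hab) hpref).not_ge (hB ha)

theorem eq_of_isMaxOn_aggregate [LinearOrder α]
    (hqsm : ∀ s₁ s₂ t₁ t₂, s₁ < s₂ → t₁ < t₂ → pay s₂ t₁ ≤ pay s₁ t₁ → pay s₂ t₂ < pay s₁ t₂)
    (hagg : StrictMono agg) (ha : a ∈ S) (hb : b ∈ S)
    (hA : IsMaxOn (pay · (agg a)) S a) (hB : IsMaxOn (pay · (agg b)) S b) : a = b :=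
  le_antisymm (not_lt.1 (not_lt_of_isMaxOn_aggregate hqsm hagg hb ha hB hA))
    (not_lt.1 (not_lt_of_isMaxOn_aggregate hqsm hagg ha hb hA hB))

end AggregateTaking

theorem ats_unique_general
    (n : ℕ) (hn : 2 ≤ n) (S : Finset ℝ)
    (g : (Fin n → ℝ) → ℝ) (pay : ℝ → ℝ → ℝ)
    (hgmono : StrictMono g)
    (hqsm1 : ∀ s1 s2 t1 t2 : ℝ, s1 < s2 → t1 < t2 →
      pay s2 t1 ≤ pay s1 t1 → pay s2 t2 < pay s1 t2)
    (s1 s2 : ℝ) (hs1 : s1 ∈ S) (hs2 : s2 ∈ S)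
    (hATS1 : ∀ s ∈ S, pay s (g fun _ => s1) ≤ pay s1 (g fun _ => s1))
    (hATS2 : ∀ s ∈ S, pay s (g fun _ => s2) ≤ pay s2 (g fun _ => s2)) :
    s1 = s2 := by
  have : Nonempty (Fin n) := ⟨⟨0, by omega⟩⟩
  have hdiag : StrictMono fun s : ℝ => g fun _ => s := hgmono.comp Function.const_strictMono
  exact eq_of_isMaxOn_aggregate hqsm1 hdiag hs1 hs2 (isMaxOn_iff.2 hATS1) (isMaxOn_iff.2 hATS2)

/-- In a strictly quasi-submodular symmetric aggregative game with strictly monotone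
aggregator, the aggregate-taking strategy is unique. -/
theorem ats_unique
    (n : ℕ) (hn : 2 ≤ n) (S : Finset ℝ)
    (g : (Fin n → ℝ) → ℝ) (pay : ℝ → ℝ → ℝ)
    (hgsym : ∀ (σ : Equiv.Perm (Fin n)) (s : Fin n → ℝ), g (s ∘ σ) = g s)
    (hgmono : StrictMono g)
    (hqsm1 : ∀ s1 s2 t1 t2 : ℝ, s1 < s2 → t1 < t2 →
      pay s2 t1 ≤ pay s1 t1 → pay s2 t2 < pay s1 t2)
    (hqsm2 : ∀ s1 s2 t1 t2 : ℝ, s1 < s2 → t1 < t2 →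
      pay s1 t2 ≤ pay s2 t2 → pay s1 t1 > pay s2 t1)
    (s1 s2 : ℝ) (hs1 : s1 ∈ S) (hs2 : s2 ∈ S)
    (hATS1 : ∀ s ∈ S, pay s (g fun _ => s1) ≤ pay s1 (g fun _ => s1))
    (hATS2 : ∀ s ∈ S, pay s (g fun _ => s2) ≤ pay s2 (g fun _ => s2)) :
    s1 = s2 :=
  ats_unique_general n hn S g pay hgmono hqsm1 s1 s2 hs1 hs2 hATS1 hATS2
end

section
/- The function h : [0, q^W) → (q^W, Q_max) defined implicitly by Δ(q, h(q)) = 0 with h(q) > q is continuous and strictly decreasing. -/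
/-- Relative payoff difference of a single deviation from a symmetric profile. -/
noncomputable def Delta (n : ℕ) (p c : ℝ → ℝ) (q q' : ℝ) : ℝ :=
  p (q' + ((n : ℝ) - 1) * q) * (q' - q) + c q - c q'

/-!
For fixed `q ≥ 0`, `Δ(q, ·)` is strictly concave on `[q, Q_max - (n-1)q]` (second derivative
`p''·(q' - q) + 2p' - c'' < 0`) and vanishes at `q`, so it is positive on `(q, h(q))` and negative
beyond `h(q)`. This sign change persists under small perturbations of `q`, and the intermediate
value theorem together with uniqueness of the nontrivial zero gives continuity of `h`.

For `q₁ < q₂`, convexity of `c` bounds the secant slope of `c` on `[q₁, h(q₂)]` by the one on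
`[q₂, h(q₂)]`, which equals `p(h(q₂) + (n-1)q₂) < p(h(q₂) + (n-1)q₁)`; hence `Δ(q₁, h(q₂)) > 0`,
which by the sign pattern of `Δ(q₁, ·)` forces `h(q₂) < h(q₁)`.
-/

open Set Filter Topology Function

section SignChange

variable {α : Type*} [TopologicalSpace α] {F : α → ℝ → ℝ} {h : α → ℝ} {s : Set α} {a : α}

lemma eventually_mem_Ioo_of_sign_change (hF : Continuous (uncurry F)) {y₁ y₂ : ℝ}
    (huniq : ∀ x ∈ s, ∀ y ∈ Ioo y₁ y₂, F x y = 0 → y = h x) (hy : y₁ ≤ y₂)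
    (h₁ : 0 < F a y₁) (h₂ : F a y₂ < 0) : ∀ᶠ x in 𝓝[s] a, h x ∈ Ioo y₁ y₂ := by
  have hpos : ∀ᶠ x in 𝓝 a, 0 < F x y₁ :=
    continuousAt_const.eventually_lt (hF.uncurry_right y₁).continuousAt h₁
  have hneg : ∀ᶠ x in 𝓝 a, F x y₂ < 0 :=
    (hF.uncurry_right y₂).continuousAt.eventually_lt continuousAt_const h₂
  filter_upwards [nhdsWithin_le_nhds hpos, nhdsWithin_le_nhds hneg, self_mem_nhdsWithin]
    with x hx₁ hx₂ hx
  obtain ⟨y, hy, hy0⟩ := intermediate_value_Ioo' hy (hF.uncurry_left x).continuousOn ⟨hx₂, hx₁⟩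
  exact huniq x hx y hy hy0 ▸ hy

lemma continuousWithinAt_of_sign_change (hF : Continuous (uncurry F)) {t : Set ℝ}
    (ht : t ∈ 𝓝 (h a)) (huniq : ∀ x ∈ s, ∀ y ∈ t, F x y = 0 → y = h x)
    (hpos : ∀ᶠ y in 𝓝[<] h a, 0 < F a y) (hneg : ∀ᶠ y in 𝓝[>] h a, F a y < 0) :
    ContinuousWithinAt h s a := by
  obtain ⟨l, u, ⟨hl, hu⟩, hlu⟩ := mem_nhds_iff_exists_Ioo_subset.1 ht
  refine (nhds_basis_Ioo (h a)).tendsto_right_iff.2 fun ⟨l', u'⟩ ⟨hl', hu'⟩ => ?_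
  obtain ⟨y₁, hy₁, hly₁, hy₁a⟩ := (hpos.and (Ioo_mem_nhdsLT (max_lt hl hl'))).exists
  obtain ⟨y₂, hy₂, hay₂, hy₂u⟩ := (hneg.and (Ioo_mem_nhdsGT (lt_min hu hu'))).exists
  rw [max_lt_iff] at hly₁
  rw [lt_min_iff] at hy₂u
  have huniq' : ∀ x ∈ s, ∀ y ∈ Ioo y₁ y₂, F x y = 0 → y = h x := fun x hx y hy =>
    huniq x hx y (hlu ⟨hly₁.1.trans hy.1, hy.2.trans hy₂u.1⟩)
  filter_upwards [eventually_mem_Ioo_of_sign_change hF huniq' (hy₁a.trans hay₂).le hy₁ hy₂]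
    with x hx
  exact ⟨hly₁.2.trans hx.1, hx.2.trans hy₂u.2⟩

end SignChange

section Concave

variable {𝕜 : Type*} [Field 𝕜] [LinearOrder 𝕜] [IsStrictOrderedRing 𝕜] {g : 𝕜 → 𝕜} {a b e x : 𝕜}

lemma StrictConcaveOn.pos_of_mem_Ioo (hg : StrictConcaveOn 𝕜 (Icc a e) g) (hab : a < b)
    (hbe : b ≤ e) (ga : g a = 0) (gb : g b = 0) (hx : x ∈ Ioo a b) : 0 < g x := by
  have := hg.lt_on_openSegment (left_mem_Icc.2 (hab.le.trans hbe)) ⟨hab.le, hbe⟩ hab.ne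
    (openSegment_eq_Ioo hab ▸ hx)
  rwa [ga, gb, min_self] at this

lemma StrictConcaveOn.neg_of_mem_Ioc (hg : StrictConcaveOn 𝕜 (Icc a e) g) (hab : a < b)
    (ga : g a = 0) (gb : g b = 0) (hx : x ∈ Ioc b e) : g x < 0 := by
  have hax := hab.trans hx.1
  have hb : b ∈ openSegment 𝕜 a x := by rw [openSegment_eq_Ioo hax]; exact ⟨hab, hx.1⟩
  have := hg.lt_on_openSegment (left_mem_Icc.2 (hax.le.trans hx.2)) ⟨hax.le, hx.2⟩ hax.ne hb
  rw [ga, gb, min_lt_iff] at this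
  exact this.resolve_left (lt_irrefl 0)

lemma StrictConcaveOn.lt_of_pos (hg : StrictConcaveOn 𝕜 (Icc a e) g) (hab : a < b)
    (ga : g a = 0) (gb : g b = 0) (hxe : x ≤ e) (hx : 0 < g x) : x < b := by
  by_contra! hbx
  rcases hbx.eq_or_lt with rfl | hbx
  · exact hx.ne' gb
  · exact lt_asymm (hg.neg_of_mem_Ioc hab ga gb ⟨hbx, hxe⟩) hx

end Concave

lemma strictConcaveOn_mul_sub {p : ℝ → ℝ} (hp : ContDiff ℝ 2 p) {k a b : ℝ}
    (hp' : ∀ x ∈ Ioo (a + k) (b + k), deriv p x < 0)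
    (hp'' : ∀ x ∈ Ioo (a + k) (b + k), deriv (deriv p) x ≤ 0) :
    StrictConcaveOn ℝ (Icc a b) (fun x => p (x + k) * (x - a)) := by
  have hd := hp.differentiable two_ne_zero
  have hd2 := hp.differentiable_deriv_two
  have hpc := hp.continuous
  have hderiv : deriv (fun x => p (x + k) * (x - a)) =
      fun x => deriv p (x + k) * (x - a) + p (x + k) := by
    funext x
    have := ((hd _).hasDerivAt.comp_add_const x k).mul ((hasDerivAt_id x).sub_const a)
    exact (this.congr_deriv (by simp)).deriv
  refine strictConcaveOn_of_deriv2_neg (convex_Icc a b) (by fun_prop) fun x hx => ?_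
  rw [interior_Icc] at hx
  have hx' : x + k ∈ Ioo (a + k) (b + k) := ⟨by linarith [hx.1], by linarith [hx.2]⟩
  have h2 : HasDerivAt (fun x => deriv p (x + k) * (x - a) + p (x + k))
      (deriv (deriv p) (x + k) * (x - a) + 2 * deriv p (x + k)) x := by
    have := (((hd2 _).hasDerivAt.comp_add_const x k).mul ((hasDerivAt_id x).sub_const a)).add
      ((hd _).hasDerivAt.comp_add_const x k)
    exact this.congr_deriv (by simp only [id, mul_one]; ring)
  rw [iterate_succ_apply', iterate_one, hderiv, h2.deriv]
  nlinarith [hp' _ hx', hp'' _ hx', hx.1]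

section Delta

variable {n : ℕ} {p c : ℝ → ℝ}

lemma Delta_self (q : ℝ) : Delta n p c q q = 0 := by
  unfold Delta
  ring

lemma continuous_uncurry_Delta (hp : Continuous p) (hc : Continuous c) :
    Continuous (uncurry (Delta n p c)) := by
  unfold Delta
  fun_prop

lemma strictConcaveOn_Delta {Qmax q : ℝ} (hp : ContDiff ℝ 2 p) (hc : ConvexOn ℝ (Ici 0) c)
    (hp' : ∀ x ∈ Icc (0 : ℝ) Qmax, deriv p x < 0)
    (hp'' : ∀ x ∈ Icc (0 : ℝ) Qmax, deriv (deriv p) x ≤ 0) (hq : 0 ≤ q) :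
    StrictConcaveOn ℝ (Icc q (Qmax - ((n : ℝ) - 1) * q)) (Delta n p c q) := by
  have hmem : Ioo (q + ((n : ℝ) - 1) * q) (Qmax - ((n : ℝ) - 1) * q + ((n : ℝ) - 1) * q) ⊆
      Icc 0 Qmax := fun x hx => by
    have : 0 ≤ (n : ℝ) * q := by positivity
    constructor <;> linarith [hx.1, hx.2]
  have hcq : ConvexOn ℝ (Icc q (Qmax - ((n : ℝ) - 1) * q)) c :=
    hc.subset (fun x hx => hq.trans hx.1) (convex_Icc _ _)
  exact ((strictConcaveOn_mul_sub hp (fun x hx => hp' x (hmem hx))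
    (fun x hx => hp'' x (hmem hx))).add_const (c q)).sub_convexOn hcq

lemma Delta_pos_of_Delta_eq_zero {s : Set ℝ} (hc : ConvexOn ℝ s c) {q₁ q₂ b : ℝ}
    (hq₁ : q₁ ∈ s) (hb : b ∈ s) (hq : q₁ < q₂) (hqb : q₂ < b)
    (hp : p (b + ((n : ℝ) - 1) * q₂) < p (b + ((n : ℝ) - 1) * q₁))
    (h₂ : Delta n p c q₂ b = 0) : 0 < Delta n p c q₁ b := by
  have hsecant := hc.secant_mono_aux1 hq₁ hb hq hqb
  unfold Delta at h₂ ⊢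
  nlinarith [mul_lt_mul_of_pos_right hp (sub_pos.2 (hq.trans hqb))]

end Delta

theorem h_continuous_strictAnti_general
    (n : ℕ) (hn : 2 ≤ n) (Qmax : ℝ)
    (p c : ℝ → ℝ) (hp : ContDiff ℝ 2 p) (hc : ContDiff ℝ 2 c)
    (hp' : ∀ x ∈ Set.Icc (0:ℝ) Qmax, deriv p x < 0)
    (hp'' : ∀ x ∈ Set.Icc (0:ℝ) Qmax, deriv (deriv p) x ≤ 0)
    (hc'' : ∀ x : ℝ, 0 ≤ x → 0 ≤ deriv (deriv c) x)
    (qW : ℝ)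
    (h : ℝ → ℝ)
    (hh : ∀ q ∈ Set.Ico (0:ℝ) qW,
      q < h q ∧ h q < Qmax - ((n : ℝ) - 1) * q ∧ qW < h q ∧
      Delta n p c q (h q) = 0 ∧
      ∀ q' : ℝ, q < q' → Delta n p c q q' = 0 → q' = h q) :
    ContinuousOn h (Set.Ico 0 qW) ∧ StrictAntiOn h (Set.Ico 0 qW) := by
  have hcvx : ConvexOn ℝ (Ici 0) c := convexOn_of_deriv2_nonneg (convex_Ici 0)
    hc.continuous.continuousOn (hc.differentiable two_ne_zero).differentiableOn
    hc.differentiable_deriv_two.differentiableOn fun x hx => hc'' x (interior_subset hx)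
  have hpanti : StrictAntiOn p (Icc 0 Qmax) := strictAntiOn_of_deriv_neg (convex_Icc 0 Qmax)
    hp.continuous.continuousOn fun x hx => hp' x (interior_subset hx)
  have hconc (q) (hq : q ∈ Ico 0 qW) := strictConcaveOn_Delta (n := n) hp hcvx hp' hp'' hq.1
  refine ⟨fun q hq => ?_, fun q₁ hq₁ q₂ hq₂ hq => ?_⟩
  · obtain ⟨hlt, hub, hqW, hzero, -⟩ := hh q hq
    refine continuousWithinAt_of_sign_change (continuous_uncurry_Delta hp.continuous hc.continuous)
      (Ioi_mem_nhds hqW) (fun x hx y hy => (hh x hx).2.2.2.2 y (hx.2.trans hy)) ?_ ?_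
    · filter_upwards [Ioo_mem_nhdsLT hlt] with y hy
      exact (hconc q hq).pos_of_mem_Ioo hlt hub.le (Delta_self q) hzero hy
    · filter_upwards [Ioo_mem_nhdsGT hub] with y hy
      exact (hconc q hq).neg_of_mem_Ioc hlt (Delta_self q) hzero (Ioo_subset_Ioc_self hy)
  · obtain ⟨hlt₁, -, -, hzero₁, -⟩ := hh q₁ hq₁
    obtain ⟨hlt₂, hub₂, -, hzero₂, -⟩ := hh q₂ hq₂
    have hm : (1 : ℝ) ≤ n - 1 := by
      have : (2 : ℝ) ≤ n := by exact_mod_cast hn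
      linarith
    have hmem₁ : h q₂ + ((n : ℝ) - 1) * q₁ ∈ Icc 0 Qmax := ⟨by nlinarith [hq₁.1], by nlinarith⟩
    have hmem₂ : h q₂ + ((n : ℝ) - 1) * q₂ ∈ Icc 0 Qmax := ⟨by nlinarith [hq₂.1], by linarith⟩
    have hpos : 0 < Delta n p c q₁ (h q₂) :=
      Delta_pos_of_Delta_eq_zero hcvx hq₁.1 (mem_Ici.2 (by linarith [hq₂.1])) hq hlt₂
        (hpanti hmem₁ hmem₂ (by nlinarith)) hzero₂
    exact (hconc q₁ hq₁).lt_of_pos hlt₁ (Delta_self q₁) hzero₁ (by nlinarith) hpos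

/-- The function `h` on `[0, q^W)`, defined implicitly by `Δ(q, h(q)) = 0` with
`h(q) > q` (the unique nontrivial zero), is continuous and strictly decreasing. -/
theorem h_continuous_strictAnti
    (n : ℕ) (hn : 2 ≤ n) (Qmax : ℝ) (hQmax : 0 < Qmax)
    (p c : ℝ → ℝ) (hp : ContDiff ℝ 2 p) (hc : ContDiff ℝ 2 c)
    (hp' : ∀ x ∈ Set.Icc (0:ℝ) Qmax, deriv p x < 0)
    (hp'' : ∀ x ∈ Set.Icc (0:ℝ) Qmax, deriv (deriv p) x ≤ 0)
    (hc'' : ∀ x : ℝ, 0 ≤ x → 0 ≤ deriv (deriv c) x)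
    (qW : ℝ) (hqW0 : 0 < qW) (hqWQ : (n : ℝ) * qW < Qmax)
    (h : ℝ → ℝ)
    (hh : ∀ q ∈ Set.Ico (0:ℝ) qW,
      q < h q ∧ h q < Qmax - ((n : ℝ) - 1) * q ∧ qW < h q ∧
      Delta n p c q (h q) = 0 ∧
      ∀ q' : ℝ, q < q' → Delta n p c q q' = 0 → q' = h q) :
    ContinuousOn h (Set.Ico 0 qW) ∧ StrictAntiOn h (Set.Ico 0 qW) :=
  h_continuous_strictAnti_general n hn Qmax p c hp hc hp' hp'' hc'' qW h hh
end

section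
/- For n ≥ 3 firms, for all sufficiently small ε > 0, Δ(h(0) - ε, 0) > 0; equivalently, a firm producing 0 has a strict relative payoff advantage against n-1 firms each producing h(0) - ε. -/
/-!
Since `h0` breaks even against the empty market, `c 0 = c h0 - p h0 * h0`, so
`Δ(h0 - ε, 0) = (p h0 - p Q) * h0 + ε * p Q - (c h0 - c (h0 - ε))` with `Q = (n - 1)(h0 - ε)`.
For `n ≥ 3` and `ε ≤ h0 / 4` we have `Q ≥ 3/2 * h0`, so the first term is at least the fixed
positive amount `(p h0 - p (3/2 * h0)) * h0`, the second is nonnegative, and the cost difference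
tends to `0` with `ε` by continuity of `c`.
-/

open Filter Topology

section Price

variable {p : ℝ → ℝ} {Qmax : ℝ}

theorem apply_min_of_vanishes_above (hpQ : ∀ Q : ℝ, Qmax ≤ Q → p Q = 0) (y : ℝ) :
    p (min y Qmax) = p y := by
  rcases le_total y Qmax with hy | hy
  · rw [min_eq_left hy]
  · rw [min_eq_right hy, hpQ Qmax le_rfl, hpQ y hy]

theorem antitoneOn_Ici_of_vanishes_above (hp : StrictAntiOn p (Set.Icc 0 Qmax))
    (hpQ : ∀ Q : ℝ, Qmax ≤ Q → p Q = 0) (hQ : 0 ≤ Qmax) : AntitoneOn p (Set.Ici 0) := by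
  intro x hx y hy hxy
  rw [← apply_min_of_vanishes_above hpQ x, ← apply_min_of_vanishes_above hpQ y]
  exact hp.antitoneOn ⟨le_min hx hQ, min_le_right _ _⟩ ⟨le_min hy hQ, min_le_right _ _⟩
    (min_le_min_right _ hxy)

theorem nonneg_of_vanishes_above (hp : StrictAntiOn p (Set.Icc 0 Qmax))
    (hpQ : ∀ Q : ℝ, Qmax ≤ Q → p Q = 0) (hQ : 0 ≤ Qmax) {x : ℝ} (hx : 0 ≤ x) : 0 ≤ p x := by
  rw [← hpQ (max x Qmax) (le_max_right _ _)]
  exact antitoneOn_Ici_of_vanishes_above hp hpQ hQ hx (hx.trans (le_max_left _ _))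
    (le_max_left _ _)

theorem lt_of_vanishes_above (hp : StrictAntiOn p (Set.Icc 0 Qmax))
    (hpQ : ∀ Q : ℝ, Qmax ≤ Q → p Q = 0) {x y : ℝ} (hx : 0 ≤ x) (hxQ : x < Qmax)
    (hxy : x < y) : p y < p x := by
  rw [← apply_min_of_vanishes_above hpQ y]
  exact hp ⟨hx, hxQ.le⟩ ⟨hx.trans (lt_min hxy hxQ).le, min_le_right _ _⟩ (lt_min hxy hxQ)

end Price

theorem Delta_sub_zero_eq {n : ℕ} {p c : ℝ → ℝ} {h0 : ℝ} (hh0 : p h0 * h0 - c h0 + c 0 = 0)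
    (ε : ℝ) :
    Delta n p c (h0 - ε) 0 = (p h0 - p (((n : ℝ) - 1) * (h0 - ε))) * h0
      + ε * p (((n : ℝ) - 1) * (h0 - ε)) - (c h0 - c (h0 - ε)) := by
  rw [Delta, zero_add]
  linear_combination -hh0

theorem eventually_sub_lt_of_continuousAt {c : ℝ → ℝ} {x δ : ℝ} (hc : ContinuousAt c x)
    (hδ : 0 < δ) : ∀ᶠ ε in 𝓝 (0 : ℝ), c x - c (x - ε) < δ := by
  have hlim : Tendsto (fun ε => c x - c (x - ε)) (𝓝 0) (𝓝 (c x - c x)) := by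
    refine tendsto_const_nhds.sub (hc.tendsto.comp ?_)
    exact (continuous_sub_left x).tendsto' 0 x (sub_zero x)
  exact hlim.eventually (gt_mem_nhds (by simpa using hδ))

theorem Delta_pos_near_h0_general
    (n : ℕ) (hn : 3 ≤ n) (Qmax : ℝ)
    (p c : ℝ → ℝ)
    (hp : StrictAntiOn p (Set.Icc 0 Qmax))
    (hpQ : ∀ Q : ℝ, Qmax ≤ Q → p Q = 0)
    (hcd : Differentiable ℝ c)
    (qW h0 : ℝ) (hqW : 0 < qW) (hWh : qW < h0) (hhQ : h0 < Qmax)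
    (hh0 : p h0 * h0 - c h0 + c 0 = 0) :
    ∃ ε0 > (0:ℝ), ∀ ε : ℝ, 0 < ε → ε < ε0 → 0 < Delta n p c (h0 - ε) 0 := by
  have hh0pos : 0 < h0 := hqW.trans hWh
  have hQmax : 0 ≤ Qmax := (hh0pos.trans hhQ).le
  set gap := p h0 - p (3 / 2 * h0)
  have hgap : 0 < gap := sub_pos.2 (lt_of_vanishes_above hp hpQ hh0pos.le hhQ (by linarith))
  have hcost := eventually_sub_lt_of_continuousAt (hcd.continuous.continuousAt (x := h0))
    (mul_pos hgap hh0pos)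
  have hsmall : ∀ᶠ ε in 𝓝 (0 : ℝ), ε < h0 / 4 := gt_mem_nhds (by positivity)
  obtain ⟨ε0, hε0, hball⟩ := Metric.eventually_nhds_iff.1 (hcost.and hsmall)
  refine ⟨ε0, hε0, fun ε hε hεlt => ?_⟩
  obtain ⟨hcε, hε4⟩ := hball (by rwa [Real.dist_0_eq_abs, abs_of_pos hε])
  have hn3 : (3 : ℝ) ≤ n := by exact_mod_cast hn
  set Q := ((n : ℝ) - 1) * (h0 - ε)
  have hQ : 3 / 2 * h0 ≤ Q := by nlinarith
  have hpQ_le : p Q ≤ p (3 / 2 * h0) :=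
    antitoneOn_Ici_of_vanishes_above hp hpQ hQmax (by positivity : (0 : ℝ) ≤ 3 / 2 * h0)
      (le_trans (by positivity) hQ) hQ
  have hpQ_nonneg : 0 ≤ p Q := nonneg_of_vanishes_above hp hpQ hQmax (by nlinarith)
  rw [Delta_sub_zero_eq hh0]
  nlinarith [mul_nonneg hε.le hpQ_nonneg]

/-- For `n ≥ 3` firms, for all sufficiently small `ε > 0` we have `Δ(h(0) - ε, 0) > 0`:
a firm producing `0` enjoys a strict relative payoff advantage against `n - 1` firms
each producing `h(0) - ε`. -/
theorem Delta_pos_near_h0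
    (n : ℕ) (hn : 3 ≤ n) (Qmax : ℝ) (hQmax : 0 < Qmax)
    (p c : ℝ → ℝ)
    (hp : StrictAntiOn p (Set.Icc 0 Qmax))
    (hpQ : ∀ Q : ℝ, Qmax ≤ Q → p Q = 0)
    (hpnn : ∀ Q : ℝ, 0 ≤ Q → 0 ≤ p Q)
    (hcd : Differentiable ℝ c) (hc' : Monotone (deriv c))
    (qW h0 : ℝ) (hqW : 0 < qW) (hWh : qW < h0) (hhQ : h0 < Qmax)
    (hh0 : p h0 * h0 - c h0 + c 0 = 0) :
    ∃ ε0 > (0:ℝ), ∀ ε : ℝ, 0 < ε → ε < ε0 → 0 < Delta n p c (h0 - ε) 0 :=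
  Delta_pos_near_h0_general n hn Qmax p c hp hpQ hcd qW h0 hqW hWh hhQ hh0
end
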